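/- Let L ≥ 1, let B, B̃ ∈ ℝ^{L×L} and ψ, ψ̃ ∈ ℝ, and let E = e_L e_Lᵀ be the L×L matrix whose only nonzero entry is a 1 in position (L,L). Suppose θ ∈ ℝ and v, w ∈ ℂ^L satisfy [[B, ψI],[−E, Bᵀ]] (v; w) = θ [[B̃, ψ̃I],[−E, B̃ᵀ]] (v; w). Then ψ‖w‖₂² + |v_L|² = θ (ψ̃‖w‖₂² + |v_L|²), where v_L denotes the last component of v. -/

import Mathlib

/-!
Pair the eigenvalue equation with `(v, w)`: multiply the first block row by `w*`, the second by
`v*`, and subtract the complex conjugate of the second from the first. Because the blocks are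
real, `w* B v` and `conj (v* Bᵀ w)` cancel, leaving `ψ ‖w‖² + |v_L|²` on the left and, since `θ`
is real and so commutes with conjugation, `θ (ψ̃ ‖w‖² + |v_L|²)` on the right.
-/

open Matrix

/-- The L×L matrix whose only nonzero entry is a 1 in the bottom-right corner. -/
def cornerMat (L : ℕ) : Matrix (Fin L) (Fin L) ℝ :=
  fun i j => if (i : ℕ) = L - 1 ∧ (j : ℕ) = L - 1 then 1 else 0

/-- The terminal-cost block matrix [[B, ψI],[−E, Bᵀ]]. -/
def terminalBlock (L : ℕ) (B : Matrix (Fin L) (Fin L) ℝ) (ψ : ℝ) :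
    Matrix (Fin L ⊕ Fin L) (Fin L ⊕ Fin L) ℝ :=
  Matrix.fromBlocks B (ψ • (1 : Matrix (Fin L) (Fin L) ℝ)) (-(cornerMat L)) Bᵀ


theorem map_ofReal_transpose {m n : Type*} (B : Matrix m n ℝ) :
    Bᵀ.map Complex.ofReal = (B.map Complex.ofReal)ᴴ := by
  rw [← conjTranspose_eq_transpose_of_trivial, conjTranspose_map]
  exact fun x => (Complex.conj_ofReal x).symm

section

variable {n : Type*} [Fintype n]

theorem star_dotProduct_conjTranspose_mulVec {α : Type*} [CommSemiring α] [StarRing α]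
    (A : Matrix n n α) (v w : n → α) :
    star (star v ⬝ᵥ Aᴴ *ᵥ w) = star w ⬝ᵥ A *ᵥ v := by
  rw [← star_dotProduct, star_mulVec, conjTranspose_conjTranspose, dotProduct_mulVec]

/-- Only `ℝ`-linear in `y`, which is why the eigenvalue `θ` has to be real. -/
def blockPairing (v w : n → ℂ) (y : n ⊕ n → ℂ) : ℂ :=
  star w ⬝ᵥ (y ∘ Sum.inl) - star (star v ⬝ᵥ (y ∘ Sum.inr))

theorem blockPairing_ofReal_smul (v w : n → ℂ) (θ : ℝ) (y : n ⊕ n → ℂ) :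
    blockPairing v w ((θ : ℂ) • y) = θ * blockPairing v w y := by
  have smul_comp : ∀ f : n → n ⊕ n, ((θ : ℂ) • y) ∘ f = (θ : ℂ) • (y ∘ f) := fun _ => rfl
  rw [blockPairing, blockPairing, smul_comp, smul_comp, dotProduct_smul, dotProduct_smul,
    smul_eq_mul, smul_eq_mul, star_mul', Complex.star_def, Complex.conj_ofReal, mul_sub]

theorem blockPairing_fromBlocks_mulVec [DecidableEq n] (B C : Matrix n n ℝ) (ψ : ℝ)
    (v w : n → ℂ) :
    blockPairing v w ((fromBlocks B (ψ • 1) (-C) Bᵀ).map Complex.ofReal *ᵥ Sum.elim v w) =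
      ψ * (star w ⬝ᵥ w) + star (star v ⬝ᵥ C.map Complex.ofReal *ᵥ v) := by
  have hψ : (ψ • (1 : Matrix n n ℝ)).map Complex.ofReal = (ψ : ℂ) • 1 := by
    rw [Matrix.map_smul' _ _ _ Complex.ofReal_mul,
      Matrix.map_one _ Complex.ofReal_zero Complex.ofReal_one]
  rw [fromBlocks_map, fromBlocks_mulVec, blockPairing, Sum.elim_comp_inl, Sum.elim_comp_inr,
    Sum.elim_comp_inl, Sum.elim_comp_inr, hψ, map_ofReal_transpose,
    Matrix.map_neg _ Complex.ofReal_neg]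
  simp only [dotProduct_add, star_add, neg_mulVec, dotProduct_neg, star_neg, smul_mulVec,
    one_mulVec, dotProduct_smul, smul_eq_mul, star_dotProduct_conjTranspose_mulVec]
  ring

end

theorem cornerMat_eq_single {L : ℕ} {l : Fin L} (hl : (l : ℕ) = L - 1) :
    cornerMat L = single l l 1 := by
  ext i j
  simp only [cornerMat, single_apply, Fin.ext_iff, hl, eq_comm (a := (i : ℕ)),
    eq_comm (a := (j : ℕ))]

theorem star_dotProduct_single_mulVec {n α : Type*} [Fintype n] [DecidableEq n] [CommSemiring α]
    [StarRing α] (i : n) (c : α) (v : n → α) :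
    star v ⬝ᵥ single i i c *ᵥ v = star (v i) * c * v i := by
  rw [single_mulVec, ← Pi.single, dotProduct_single, Pi.star_apply, mul_assoc]

theorem star_dotProduct_cornerMat_mulVec {L : ℕ} {l : Fin L} (hl : (l : ℕ) = L - 1)
    (v : Fin L → ℂ) :
    star v ⬝ᵥ (cornerMat L).map Complex.ofReal *ᵥ v = ((‖v l‖ ^ 2 : ℝ) : ℂ) := by
  have hmap : (cornerMat L).map Complex.ofReal = single l l 1 := by
    rw [cornerMat_eq_single hl]
    exact (map_single _ _ _ Complex.ofRealHom).trans (congrArg _ Complex.ofReal_one)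
  rw [hmap, star_dotProduct_single_mulVec, mul_one, Complex.star_def, Complex.conj_mul',
    Complex.ofReal_pow]

theorem star_dotProduct_self_eq_sum_norm_sq {n : Type*} [Fintype n] (w : n → ℂ) :
    star w ⬝ᵥ w = ((∑ i, ‖w i‖ ^ 2 : ℝ) : ℂ) := by
  simp only [dotProduct, Pi.star_apply, Complex.star_def, Complex.conj_mul', Complex.ofReal_sum,
    Complex.ofReal_pow]

theorem terminal_cost_real_eigenvalue_identity
    (L : ℕ) (hL : 1 ≤ L) (B Bt : Matrix (Fin L) (Fin L) ℝ) (ψ ψt : ℝ)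
    (θ : ℝ) (v w : Fin L → ℂ)
    (heig : ((terminalBlock L B ψ).map Complex.ofReal).mulVec (Sum.elim v w) =
      (θ : ℂ) • ((terminalBlock L Bt ψt).map Complex.ofReal).mulVec (Sum.elim v w)) :
    ψ * ∑ i, ‖w i‖ ^ 2 + ‖v ⟨L - 1, by omega⟩‖ ^ 2 =
      θ * (ψt * ∑ i, ‖w i‖ ^ 2 + ‖v ⟨L - 1, by omega⟩‖ ^ 2) := by
  have key := congrArg (blockPairing v w) heig
  simp only [blockPairing_ofReal_smul, terminalBlock, blockPairing_fromBlocks_mulVec,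
    star_dotProduct_cornerMat_mulVec (l := ⟨L - 1, by omega⟩) rfl,
    star_dotProduct_self_eq_sum_norm_sq, Complex.star_def, Complex.conj_ofReal] at key
  exact_mod_cast key
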